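/- arXiv:math/0411303 — 6 statements merged into one kernel-verified Lean document; each statement's English description precedes it below -/
import Mathlib

section
/- For every (R,ψ) ∈ ℝ², the Euclidean norm of ∂F/∂R(R,ψ) equals 1, the Euclidean inner product of ∂F/∂R(R,ψ) and ∂F/∂ψ(R,ψ) equals 0, and the Euclidean norm of ∂F/∂ψ(R,ψ) equals |R − l(ψ)|; that is, the pullback of the Euclidean metric under F is dR² + (R − l(ψ))² dψ², which is the metric (3) of the paper. -/
open Real

/-- Equation (9) of the paper: Cartesian coordinates as functions of the
coordinates `(R, ψ)` built from the tangent rays of a basic curve. -/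
noncomputable def F (l : ℝ → ℝ) (p : ℝ × ℝ) : ℝ × ℝ :=
  (p.1 * Real.sin p.2 - ∫ t in (0:ℝ)..p.2, l t * Real.cos t,
   p.1 * Real.cos p.2 + ∫ t in (0:ℝ)..p.2, l t * Real.sin t)

/-! Along a ray `ψ = const` the point moves with unit speed in the direction `(sin ψ, cos ψ)`;
along `R = const`, by the fundamental theorem of calculus the integral terms add
`-l ψ • (cos ψ, -sin ψ)` to the rotation velocity `R • (cos ψ, -sin ψ)`. These two vectors are orthogonal with lengths `1` and `|R - l ψ|`. -/

theorem hasDerivAt_F_radial (l : ℝ → ℝ) (R ψ : ℝ) :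
    HasDerivAt (fun r => F l (r, ψ)) (sin ψ, cos ψ) R := by
  refine HasDerivAt.prodMk ?_ ?_
  · simpa using ((hasDerivAt_id R).mul_const (sin ψ)).sub_const (∫ t in (0:ℝ)..ψ, l t * cos t)
  · simpa using ((hasDerivAt_id R).mul_const (cos ψ)).add_const (∫ t in (0:ℝ)..ψ, l t * sin t)

theorem hasDerivAt_F_angular {l : ℝ → ℝ} (hl : Continuous l) (R ψ : ℝ) :
    HasDerivAt (fun p => F l (R, p)) ((R - l ψ) * cos ψ, -((R - l ψ) * sin ψ)) ψ := by
  have hC := (Continuous.integral_hasStrictDerivAt (f := fun t => l t * cos t)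
    (by fun_prop) 0 ψ).hasDerivAt
  have hS := (Continuous.integral_hasStrictDerivAt (f := fun t => l t * sin t)
    (by fun_prop) 0 ψ).hasDerivAt
  refine HasDerivAt.prodMk ?_ ?_
  · convert ((hasDerivAt_sin ψ).const_mul R).fun_sub hC using 1
    ring
  · convert ((hasDerivAt_cos ψ).const_mul R).fun_add hS using 1
    ring

/-- The pullback of the Euclidean metric under `F` is
`dR² + (R − l(ψ))² dψ²`: the metric (3) of the paper. -/
theorem stmt_1 (l : ℝ → ℝ) (hl : Continuous l) (R ψ : ℝ) :
    Real.sqrt ((deriv (fun r => F l (r, ψ)) R).1 ^ 2 +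
        (deriv (fun r => F l (r, ψ)) R).2 ^ 2) = 1 ∧
    (deriv (fun r => F l (r, ψ)) R).1 * (deriv (fun p => F l (R, p)) ψ).1 +
        (deriv (fun r => F l (r, ψ)) R).2 * (deriv (fun p => F l (R, p)) ψ).2 = 0 ∧
    Real.sqrt ((deriv (fun p => F l (R, p)) ψ).1 ^ 2 +
        (deriv (fun p => F l (R, p)) ψ).2 ^ 2) = |R - l ψ| := by
  rw [(hasDerivAt_F_radial l R ψ).deriv, (hasDerivAt_F_angular hl R ψ).deriv]
  have hpyth := sin_sq_add_cos_sq ψ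
  refine ⟨by simp [hpyth], by ring, ?_⟩
  calc √(((R - l ψ) * cos ψ) ^ 2 + (-((R - l ψ) * sin ψ)) ^ 2)
      = √((R - l ψ) ^ 2) := by
        congr 1
        linear_combination (R - l ψ) ^ 2 * hpyth
    _ = |R - l ψ| := sqrt_sq_eq_abs _
end

section
/- Fix R₀ ∈ ℝ and let c : ℝ → ℝ² be the evolvent (coordinate line R = R₀) given by c(ψ) = F(R₀, ψ). Then for every ψ: c′(ψ) = (R₀ − l(ψ))·(cos ψ, −sin ψ), the cross-product expression c′₁(ψ)c″₂(ψ) − c′₂(ψ)c″₁(ψ) equals −(R₀ − l(ψ))², and hence for every ψ with R₀ ≠ l(ψ) the unsigned curvature |c′₁c″₂ − c′₂c″₁| / ‖c′‖³ of c at ψ equals 1/|R₀ − l(ψ)|; that is, the radius of curvature of the evolvent R = R₀ equals |R₀ − l(ψ)|, as asserted in equation (3) of the paper. -/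
open Real

/-- The evolvent (coordinate line `R = R₀`). -/
noncomputable def evolvent (l : ℝ → ℝ) (R₀ : ℝ) (ψ : ℝ) : ℝ × ℝ := F l (R₀, ψ)

/-!
By the fundamental theorem of calculus the integral terms of `F` exactly cancel the `l`-part of
the derivative of the rotating vector `R₀ (sin ψ, cos ψ)`, so the evolvent has velocity
`ρ(ψ) (cos ψ, -sin ψ)` with `ρ = R₀ - l`: its tangent direction turns with unit angular speed,
and the speed is `|ρ|`. The cross product of velocity and acceleration is then `-ρ²`, whatever
`ρ'` is, and the curvature is `ρ² / |ρ|³ = 1 / |ρ|`.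
-/

theorem cross_velocity_acceleration_eq_neg_sq (ρ ρ' ψ : ℝ) :
    ρ * cos ψ * -(ρ' * sin ψ + ρ * cos ψ) - -(ρ * sin ψ) * (ρ' * cos ψ - ρ * sin ψ) =
      -ρ ^ 2 := by
  linear_combination (-ρ ^ 2) * sin_sq_add_cos_sq ψ

theorem sqrt_speed_sq_eq_abs (ρ ψ : ℝ) :
    sqrt ((ρ * cos ψ) ^ 2 + (-(ρ * sin ψ)) ^ 2) = |ρ| := by
  rw [← sqrt_sq_eq_abs]
  congr 1
  linear_combination ρ ^ 2 * cos_sq_add_sin_sq ψ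

theorem abs_cross_div_speed_cube_eq_inv_abs {ρ : ℝ} (hρ : ρ ≠ 0) (ψ : ℝ) :
    |-ρ ^ 2| / sqrt ((ρ * cos ψ) ^ 2 + (-(ρ * sin ψ)) ^ 2) ^ 3 = 1 / |ρ| := by
  have hρ' : |ρ| ≠ 0 := abs_ne_zero.mpr hρ
  rw [sqrt_speed_sq_eq_abs, abs_neg, abs_pow]
  field_simp

section Evolvent

variable {l : ℝ → ℝ} (R₀ : ℝ)

theorem hasDerivAt_evolvent_fst (hl : Continuous l) (ψ : ℝ) :
    HasDerivAt (fun s => (evolvent l R₀ s).1) ((R₀ - l ψ) * cos ψ) ψ := by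
  have hint := (Continuous.integral_hasStrictDerivAt (f := fun t => l t * cos t)
    (by fun_prop) 0 ψ).hasDerivAt
  exact (((hasDerivAt_sin ψ).const_mul R₀).sub hint).congr_deriv (by ring)

theorem hasDerivAt_evolvent_snd (hl : Continuous l) (ψ : ℝ) :
    HasDerivAt (fun s => (evolvent l R₀ s).2) (-((R₀ - l ψ) * sin ψ)) ψ := by
  have hint := (Continuous.integral_hasStrictDerivAt (f := fun t => l t * sin t)
    (by fun_prop) 0 ψ).hasDerivAt
  exact (((hasDerivAt_cos ψ).const_mul R₀).add hint).congr_deriv (by ring)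

theorem hasDerivAt_evolvent (hl : Continuous l) (ψ : ℝ) :
    HasDerivAt (evolvent l R₀) ((R₀ - l ψ) • (cos ψ, -sin ψ)) ψ :=
  ((hasDerivAt_evolvent_fst R₀ hl ψ).prodMk (hasDerivAt_evolvent_snd R₀ hl ψ)).congr_deriv
    (by simp only [Prod.smul_mk, smul_eq_mul, mul_neg])

theorem hasDerivAt_deriv_evolvent_fst (hl : Differentiable ℝ l) (ψ : ℝ) :
    HasDerivAt (deriv fun s => (evolvent l R₀ s).1)
      (-deriv l ψ * cos ψ - (R₀ - l ψ) * sin ψ) ψ := by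
  rw [funext fun s => (hasDerivAt_evolvent_fst R₀ hl.continuous s).deriv]
  exact (((hl ψ).hasDerivAt.const_sub R₀).mul (hasDerivAt_cos ψ)).congr_deriv (by ring)

theorem hasDerivAt_deriv_evolvent_snd (hl : Differentiable ℝ l) (ψ : ℝ) :
    HasDerivAt (deriv fun s => (evolvent l R₀ s).2)
      (-(-deriv l ψ * sin ψ + (R₀ - l ψ) * cos ψ)) ψ := by
  rw [funext fun s => (hasDerivAt_evolvent_snd R₀ hl.continuous s).deriv]
  exact (((hl ψ).hasDerivAt.const_sub R₀).mul (hasDerivAt_sin ψ)).neg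

end Evolvent

theorem stmt_5 (l : ℝ → ℝ) (hl : ContDiff ℝ 1 l) (R₀ : ℝ) (ψ : ℝ) :
    HasDerivAt (evolvent l R₀) ((R₀ - l ψ) • (Real.cos ψ, -Real.sin ψ)) ψ ∧
    (deriv (fun s => (evolvent l R₀ s).1) ψ *
        deriv (deriv (fun s => (evolvent l R₀ s).2)) ψ -
      deriv (fun s => (evolvent l R₀ s).2) ψ *
        deriv (deriv (fun s => (evolvent l R₀ s).1)) ψ) = -(R₀ - l ψ) ^ 2 ∧
    (R₀ ≠ l ψ →
      |deriv (fun s => (evolvent l R₀ s).1) ψ *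
          deriv (deriv (fun s => (evolvent l R₀ s).2)) ψ -
        deriv (fun s => (evolvent l R₀ s).2) ψ *
          deriv (deriv (fun s => (evolvent l R₀ s).1)) ψ| /
        (Real.sqrt ((deriv (fun s => (evolvent l R₀ s).1) ψ) ^ 2 +
          (deriv (fun s => (evolvent l R₀ s).2) ψ) ^ 2)) ^ 3 = 1 / |R₀ - l ψ|) := by
  have hc := hl.continuous
  have hd := hl.differentiable_one
  rw [(hasDerivAt_evolvent_fst R₀ hc ψ).deriv, (hasDerivAt_evolvent_snd R₀ hc ψ).deriv,
    (hasDerivAt_deriv_evolvent_fst R₀ hd ψ).deriv, (hasDerivAt_deriv_evolvent_snd R₀ hd ψ).deriv,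
    cross_velocity_acceleration_eq_neg_sq]
  exact ⟨hasDerivAt_evolvent R₀ hc ψ, rfl, fun hne =>
    abs_cross_div_speed_cube_eq_inv_abs (sub_ne_zero.mpr hne) ψ⟩
end

section
/- Assume l is twice continuously differentiable. Then for every ψ: γ′₁(ψ)γ″₂(ψ) − γ′₂(ψ)γ″₁(ψ) = −l′(ψ)², and hence for every ψ with l′(ψ) > 0 the unsigned curvature |γ′₁γ″₂ − γ′₂γ″₁| / ‖γ′‖³ of the basic curve γ at ψ equals 1/l′(ψ); that is, the radius of curvature of the basic curve equals l′(ψ). -/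
open Real

/-- The basic curve of the coordinate system. -/
noncomputable def γ (l : ℝ → ℝ) (ψ : ℝ) : ℝ × ℝ := F l (l ψ, ψ)

/-! The integral terms of `γ` cancel the `l · cos` and `l · sin` parts of the derivatives of
`l ψ · sin ψ` and `l ψ · cos ψ`, so the velocity of `γ` is `l'(ψ) (sin ψ, cos ψ)`: a vector of
length `|l'|` turning at unit speed, whose curvature is therefore `1 / |l'|`. -/

lemma sqrt_sq_mul_sin_add_sq_mul_cos (a ψ : ℝ) :
    √((a * sin ψ) ^ 2 + (a * cos ψ) ^ 2) = |a| := by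
  rw [← Real.sqrt_sq_eq_abs]
  congr 1
  linear_combination a ^ 2 * sin_sq_add_cos_sq ψ

lemma cross_mul_sin_mul_cos {u : ℝ → ℝ} {ψ : ℝ} (hu : DifferentiableAt ℝ u ψ) :
    u ψ * sin ψ * deriv (fun s => u s * cos s) ψ -
      u ψ * cos ψ * deriv (fun s => u s * sin s) ψ = -u ψ ^ 2 := by
  have hcos : HasDerivAt (fun s => u s * cos s) _ ψ := hu.hasDerivAt.mul (hasDerivAt_cos ψ)
  have hsin : HasDerivAt (fun s => u s * sin s) _ ψ := hu.hasDerivAt.mul (hasDerivAt_sin ψ)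
  rw [hcos.deriv, hsin.deriv]
  linear_combination (-u ψ ^ 2) * sin_sq_add_cos_sq ψ

section BasicCurve

variable {l : ℝ → ℝ}

lemma hasDerivAt_γ_fst (hl : Differentiable ℝ l) (x : ℝ) :
    HasDerivAt (fun s => (γ l s).1) (deriv l x * sin x) x := by
  have hcont : Continuous fun t => l t * cos t := hl.continuous.mul continuous_cos
  have h : HasDerivAt (fun s => l s * sin s - ∫ t in (0:ℝ)..s, l t * cos t)
      (deriv l x * sin x + l x * cos x - l x * cos x) x :=
    ((hl x).hasDerivAt.mul (hasDerivAt_sin x)).sub (hcont.integral_hasStrictDerivAt 0 x).hasDerivAt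
  rwa [add_sub_cancel_right] at h

lemma hasDerivAt_γ_snd (hl : Differentiable ℝ l) (x : ℝ) :
    HasDerivAt (fun s => (γ l s).2) (deriv l x * cos x) x := by
  have hcont : Continuous fun t => l t * sin t := hl.continuous.mul continuous_sin
  have h : HasDerivAt (fun s => l s * cos s + ∫ t in (0:ℝ)..s, l t * sin t)
      (deriv l x * cos x + l x * -sin x + l x * sin x) x :=
    ((hl x).hasDerivAt.mul (hasDerivAt_cos x)).add (hcont.integral_hasStrictDerivAt 0 x).hasDerivAt
  rwa [mul_neg, neg_add_cancel_right] at h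

lemma deriv_γ_fst (hl : Differentiable ℝ l) :
    deriv (fun s => (γ l s).1) = fun s => deriv l s * sin s :=
  funext fun x => (hasDerivAt_γ_fst hl x).deriv

lemma deriv_γ_snd (hl : Differentiable ℝ l) :
    deriv (fun s => (γ l s).2) = fun s => deriv l s * cos s :=
  funext fun x => (hasDerivAt_γ_snd hl x).deriv

end BasicCurve

theorem stmt_6 (l : ℝ → ℝ) (hl : ContDiff ℝ 2 l) (ψ : ℝ) :
    (deriv (fun s => (γ l s).1) ψ * deriv (deriv (fun s => (γ l s).2)) ψ -
      deriv (fun s => (γ l s).2) ψ * deriv (deriv (fun s => (γ l s).1)) ψ) =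
      -(deriv l ψ) ^ 2 ∧
    (0 < deriv l ψ →
      |deriv (fun s => (γ l s).1) ψ * deriv (deriv (fun s => (γ l s).2)) ψ -
        deriv (fun s => (γ l s).2) ψ * deriv (deriv (fun s => (γ l s).1)) ψ| /
        (Real.sqrt ((deriv (fun s => (γ l s).1) ψ) ^ 2 +
          (deriv (fun s => (γ l s).2) ψ) ^ 2)) ^ 3 = 1 / deriv l ψ) := by
  have hl' : Differentiable ℝ l := hl.differentiable (by norm_num)
  have hl'' : DifferentiableAt ℝ (deriv l) ψ :=
    (hl.iterate_deriv' 1 1).differentiable (by norm_num) ψ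
  have cross := cross_mul_sin_mul_cos hl''
  rw [deriv_γ_fst hl', deriv_γ_snd hl']
  refine ⟨cross, fun hpos => ?_⟩
  rw [cross, sqrt_sq_mul_sin_add_sq_mul_cos, abs_neg, abs_pow, abs_of_pos hpos]
  field_simp
end

section
/- Suppose l is continuously differentiable with l′(ψ) > 0 for all ψ in an open interval I whose length is at most π. Then F is injective on the domain D = {(R,ψ) : ψ ∈ I and R > l(ψ)}; that is, the tangent rays of the basic curve, together with the parameter R, form a genuine coordinate system (a foliation of the domain D by disjoint rays). -/
open Real

/-!
The basic curve is `γ ψ = F l (l ψ, ψ)`, and `F l (R, ψ) = γ ψ + (R - l ψ) • (sin ψ, cos ψ)`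
lies on the tangent ray at `γ ψ`, since `γ' ψ = l' ψ • (sin ψ, cos ψ)`. Suppose the rays at
`ψ₁ < ψ₂ ≤ ψ₁ + π` meet in a point `P`, and project onto the fixed unit normal
`n = (cos ψ₁, -sin ψ₁)` of the first ray. Then `⟪P, n⟫ = ⟪γ ψ₁, n⟫`, while
`⟪γ ψ, n⟫` has derivative `l' ψ * sin (ψ - ψ₁) > 0` on `(ψ₁, ψ₂)` and the second ray
points into the side `⟪·, n⟫ ≥ ⟪γ ψ₂, n⟫`; hence `⟪P, n⟫ ≥ ⟪γ ψ₂, n⟫ > ⟪γ ψ₁, n⟫`.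
-/

open Set

/-- Coordinate along the unit normal `(cos θ, -sin θ)` of the ray direction `(sin θ, cos θ)`. -/
noncomputable def normalCoord (θ : ℝ) (p : ℝ × ℝ) : ℝ := p.1 * cos θ - p.2 * sin θ

section

variable {l : ℝ → ℝ}

lemma normalCoord_F (hl : Continuous l) (θ R ψ : ℝ) :
    normalCoord θ (F l (R, ψ)) = R * sin (ψ - θ) - ∫ t in (0:ℝ)..ψ, l t * cos (t - θ) := by
  have hcos : IntervalIntegrable (fun t => l t * cos t) MeasureTheory.volume 0 ψ :=
    (hl.mul continuous_cos).intervalIntegrable _ _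
  have hsin : IntervalIntegrable (fun t => l t * sin t) MeasureTheory.volume 0 ψ :=
    (hl.mul continuous_sin).intervalIntegrable _ _
  have hsplit : (∫ t in (0:ℝ)..ψ, l t * cos (t - θ))
      = (∫ t in (0:ℝ)..ψ, l t * cos t) * cos θ + (∫ t in (0:ℝ)..ψ, l t * sin t) * sin θ := by
    rw [← intervalIntegral.integral_mul_const, ← intervalIntegral.integral_mul_const,
      ← intervalIntegral.integral_add (hcos.mul_const _) (hsin.mul_const _)]
    congr 1 with t
    rw [cos_sub]
    ring
  rw [normalCoord, F, hsplit, sin_sub]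
  ring

lemma hasDerivAt_normalCoord_F_self (hl : Continuous l) {ψ : ℝ} (hd : DifferentiableAt ℝ l ψ)
    (θ : ℝ) :
    HasDerivAt (fun ψ => normalCoord θ (F l (l ψ, ψ))) (deriv l ψ * sin (ψ - θ)) ψ := by
  simp only [normalCoord_F hl]
  have hsin : HasDerivAt (fun ψ => sin (ψ - θ)) (cos (ψ - θ)) ψ := by
    simpa using ((hasDerivAt_id ψ).sub_const θ).sin
  have hint : HasDerivAt (fun ψ => ∫ t in (0:ℝ)..ψ, l t * cos (t - θ)) (l ψ * cos (ψ - θ)) ψ :=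
    ((hl.mul (continuous_cos.comp (continuous_sub_right θ))).integral_hasStrictDerivAt
      0 ψ).hasDerivAt
  refine ((hd.hasDerivAt.mul hsin).sub hint).congr_deriv ?_
  ring

lemma strictMonoOn_normalCoord_F_self (hl : Differentiable ℝ l) {θ c : ℝ} (hc : c ≤ θ + π)
    (hpos : ∀ ψ ∈ Ioo θ c, 0 < deriv l ψ) :
    StrictMonoOn (fun ψ => normalCoord θ (F l (l ψ, ψ))) (Icc θ c) := by
  have hderiv ψ := hasDerivAt_normalCoord_F_self hl.continuous (hl ψ) θ
  refine strictMonoOn_of_deriv_pos (convex_Icc θ c)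
    (fun ψ _ => (hderiv ψ).continuousAt.continuousWithinAt) fun ψ hψ => ?_
  rw [interior_Icc] at hψ
  rw [(hderiv ψ).deriv]
  exact mul_pos (hpos ψ hψ) (sin_pos_of_pos_of_lt_pi (by linarith [hψ.1]) (by linarith [hψ.2]))

lemma le_of_F_eq (hl : Differentiable ℝ l) {R₁ ψ₁ R₂ ψ₂ : ℝ} (hπ : ψ₂ ≤ ψ₁ + π)
    (hpos : ∀ ψ ∈ Ioo ψ₁ ψ₂, 0 < deriv l ψ) (hR₂ : l ψ₂ < R₂)
    (hF : F l (R₁, ψ₁) = F l (R₂, ψ₂)) : ψ₂ ≤ ψ₁ := by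
  by_contra! hlt
  have hP₁ : normalCoord ψ₁ (F l (R₁, ψ₁)) = normalCoord ψ₁ (F l (l ψ₁, ψ₁)) := by
    simp [normalCoord_F hl.continuous]
  have hP₂ : normalCoord ψ₁ (F l (l ψ₂, ψ₂)) ≤ normalCoord ψ₁ (F l (R₂, ψ₂)) := by
    rw [normalCoord_F hl.continuous, normalCoord_F hl.continuous]
    have := sin_nonneg_of_nonneg_of_le_pi (sub_nonneg.2 hlt.le) (by linarith)
    gcongr
  have hγ := strictMonoOn_normalCoord_F_self hl hπ hpos
    (left_mem_Icc.2 hlt.le) (right_mem_Icc.2 hlt.le) hlt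
  rw [hF] at hP₁
  linarith

end

lemma F_injective_fst (l : ℝ → ℝ) (ψ : ℝ) : Function.Injective fun R => F l (R, ψ) := by
  intro R₁ R₂ h
  obtain ⟨h₁, h₂⟩ := Prod.mk.inj h
  linear_combination sin ψ * h₁ + cos ψ * h₂ - (R₁ - R₂) * sin_sq_add_cos_sq ψ

/-- The tangent rays of the basic curve, together with the parameter `R`, form a
genuine coordinate system: `F` is injective on the domain
`D = {(R,ψ) : ψ ∈ I, R > l(ψ)}`. -/
theorem stmt_7 (l : ℝ → ℝ) (hl : ContDiff ℝ 1 l) (a b : ℝ) (hab : b - a ≤ Real.pi)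
    (hl' : ∀ ψ ∈ Set.Ioo a b, 0 < deriv l ψ) :
    Set.InjOn (F l) {p : ℝ × ℝ | p.2 ∈ Set.Ioo a b ∧ l p.2 < p.1} := by
  have hd : Differentiable ℝ l := hl.differentiable one_ne_zero
  rintro ⟨R₁, ψ₁⟩ ⟨⟨ha₁, hb₁⟩, hR₁⟩ ⟨R₂, ψ₂⟩ ⟨⟨ha₂, hb₂⟩, hR₂⟩ hF
  have hψ : ψ₁ = ψ₂ := le_antisymm
    (le_of_F_eq hd (by linarith) (fun ψ hψ => hl' ψ ⟨ha₂.trans hψ.1, hψ.2.trans hb₁⟩) hR₁ hF.symm)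
    (le_of_F_eq hd (by linarith) (fun ψ hψ => hl' ψ ⟨ha₁.trans hψ.1, hψ.2.trans hb₂⟩) hR₂ hF)
  subst hψ
  rw [F_injective_fst l ψ₁ hF]
end

section
/- For every (R,ψ) ∈ ℝ², S is differentiable at (R,ψ) with ∂S/∂R(R,ψ) = sin(ψ − ψ₀) and ∂S/∂ψ(R,ψ) = (R − l(ψ))·cos(ψ − ψ₀); that is, the norm-one 1-form π = sin(ψ − ψ₀) dR + (R − l(ψ)) cos(ψ − ψ₀) dψ constructed in the paper is exact, with π = dS. -/
open Real

/-- The separated solution of the Hamilton–Jacobi equation for straight lines,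
in the coordinates `(R,ψ)` with metric `dR² + (R − l(ψ))² dψ²`. -/
noncomputable def S (l : ℝ → ℝ) (ψ₀ : ℝ) (R ψ : ℝ) : ℝ :=
  R * Real.sin (ψ - ψ₀) - ∫ t in (0:ℝ)..ψ, l t * Real.cos (t - ψ₀)

/-!
`S` is the sum of `R sin(ψ - ψ₀)` and a primitive of the continuous function
`-l(t) cos(t - ψ₀)`, so by the fundamental theorem of calculus its differential at `(R, ψ)` is
the 1-form `π = sin(ψ - ψ₀) dR + (R - l(ψ)) cos(ψ - ψ₀) dψ`. The partial derivatives are read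
off `π` along the coordinate lines.
-/

open ContinuousLinearMap

noncomputable def hamiltonJacobiForm (l : ℝ → ℝ) (ψ₀ R ψ : ℝ) : ℝ × ℝ →L[ℝ] ℝ :=
  Real.sin (ψ - ψ₀) • fst ℝ ℝ ℝ + ((R - l ψ) * Real.cos (ψ - ψ₀)) • snd ℝ ℝ ℝ

theorem hasFDerivAt_S {l : ℝ → ℝ} (hl : Continuous l) (ψ₀ R ψ : ℝ) :
    HasFDerivAt (fun p : ℝ × ℝ => S l ψ₀ p.1 p.2) (hamiltonJacobiForm l ψ₀ R ψ) (R, ψ) := by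
  have hcont : Continuous fun t => l t * Real.cos (t - ψ₀) := by fun_prop
  have hsnd : HasFDerivAt (Prod.snd : ℝ × ℝ → ℝ) (snd ℝ ℝ ℝ) (R, ψ) := hasFDerivAt_snd
  have hprim := (hcont.integral_hasStrictDerivAt 0 ψ).hasDerivAt.hasFDerivAt.comp (R, ψ) hsnd
  refine ((hasFDerivAt_fst.mul (hsnd.sub_const ψ₀).sin).sub hprim).congr_fderiv ?_
  ext <;> simp [hamiltonJacobiForm]; ring

theorem stmt_8 (l : ℝ → ℝ) (hl : Continuous l) (ψ₀ R ψ : ℝ) :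
    DifferentiableAt ℝ (fun p : ℝ × ℝ => S l ψ₀ p.1 p.2) (R, ψ) ∧
    HasDerivAt (fun r => S l ψ₀ r ψ) (Real.sin (ψ - ψ₀)) R ∧
    HasDerivAt (fun p => S l ψ₀ R p) ((R - l ψ) * Real.cos (ψ - ψ₀)) ψ := by
  have hS := hasFDerivAt_S hl ψ₀ R ψ
  refine ⟨hS.differentiableAt, ?_, ?_⟩
  · simpa [hamiltonJacobiForm, Function.comp_def] using
      hS.comp_hasDerivAt R ((hasDerivAt_id R).prodMk (hasDerivAt_const R ψ))
  · simpa [hamiltonJacobiForm, Function.comp_def] using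
      hS.comp_hasDerivAt ψ ((hasDerivAt_const ψ R).prodMk (hasDerivAt_id ψ))
end

section
/- For every (R,ψ) ∈ ℝ² with R ≠ l(ψ), the function S satisfies the Hamilton–Jacobi (eikonal) equation for straight lines in the metric dR² + (R − l(ψ))² dψ², namely (∂S/∂R(R,ψ))² + (R − l(ψ))⁻² (∂S/∂ψ(R,ψ))² = 1 (equation (4) of the paper). -/
open Real

/-- Equation (4) of the paper: the eikonal equation `⟨dS,dS⟩ = 1` for straight
lines in the metric `dR² + (R − l(ψ))² dψ²`. -/
theorem stmt_9 (l : ℝ → ℝ) (hl : Continuous l) (ψ₀ R ψ : ℝ) (h : R ≠ l ψ) :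
    (deriv (fun r => S l ψ₀ r ψ) R) ^ 2 +
      (deriv (fun p => S l ψ₀ R p) ψ) ^ 2 / (R - l ψ) ^ 2 = 1 := by
  have hR : deriv (fun r => S l ψ₀ r ψ) R = Real.sin (ψ - ψ₀) := by
    have : HasDerivAt (fun r => S l ψ₀ r ψ) (Real.sin (ψ - ψ₀)) R := by
      unfold S
      simpa using ((hasDerivAt_id R).mul_const (Real.sin (ψ - ψ₀))).sub_const
        (∫ t in (0:ℝ)..ψ, l t * Real.cos (t - ψ₀))
    exact this.deriv
  have hψ : deriv (fun p => S l ψ₀ R p) ψ = (R - l ψ) * Real.cos (ψ - ψ₀) := by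
    have h1 : HasDerivAt (fun p => R * Real.sin (p - ψ₀)) (R * Real.cos (ψ - ψ₀)) ψ := by
      have := ((Real.hasDerivAt_sin (ψ - ψ₀)).comp ψ
        ((hasDerivAt_id ψ).sub_const ψ₀)).const_mul R
      simpa using this
    have h2 : HasDerivAt (fun p => ∫ t in (0:ℝ)..p, l t * Real.cos (t - ψ₀))
        (l ψ * Real.cos (ψ - ψ₀)) ψ := by
      have hc : Continuous fun t => l t * Real.cos (t - ψ₀) :=
        hl.mul (Real.continuous_cos.comp (continuous_id.sub continuous_const))
      exact intervalIntegral.integral_hasDerivAt_right (hc.intervalIntegrable 0 ψ)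
        (hc.stronglyMeasurableAtFilter _ _) hc.continuousAt
    have : HasDerivAt (fun p => S l ψ₀ R p)
        (R * Real.cos (ψ - ψ₀) - l ψ * Real.cos (ψ - ψ₀)) ψ := h1.sub h2
    rw [this.deriv]; ring
  rw [hR, hψ]
  have hne : (R - l ψ) ^ 2 ≠ 0 := pow_ne_zero 2 (sub_ne_zero.mpr h)
  field_simp
  ring_nf
  nlinarith [Real.sin_sq_add_cos_sq (ψ - ψ₀), sq_nonneg (R - l ψ)]
end
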